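/- arXiv:1410.1185 — 4 statements merged into one kernel-verified Lean document; each statement's English description precedes it below -/
import Mathlib

section
/- Let s : ℝⁿ → ℝ satisfy the log-Hölder continuity condition |s(x) − s(y)| ≤ C_log / log(e + |x−y|^{-1}) for all x ≠ y. Then there exists a constant c > 0 such that for all k ∈ ℕ, all x, y ∈ ℝⁿ, and all m > C_log: 2^{k s(x)} · η_{k,2m}(x − y) ≤ c · 2^{k s(y)} · η_{k,m}(x − y), where η_{k,m}(z) = 2^{kn} (1 + |2^k z|)^{-m}. -/
open MeasureTheory

/-- The kernel `η_{k,m}(z) = 2^{kn} (1 + |2^k z|)^{-m}`. -/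
noncomputable def etaFun (n : ℕ) (k : ℕ) (m : ℝ) (z : EuclideanSpace ℝ (Fin n)) : ℝ :=
  (2 : ℝ) ^ (k * n) * (1 + ‖((2 : ℝ) ^ k) • z‖) ^ (-m)

/-- Core elementary inequality: for `a ≥ 0`, `d > 0`,
`a / log(e + d⁻¹) ≤ 1 + log(1 + eᵃ d)` (multiplied through by `Clog`). -/
lemma etaFun_aux (Clog : ℝ) (hC : 0 < Clog) (a d : ℝ) (ha : 0 ≤ a) (hd : 0 < d) :
    a * (Clog / Real.log (Real.exp 1 + d⁻¹)) ≤
      Clog + Clog * Real.log (1 + Real.exp a * d) := by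
  set L := Real.log (Real.exp 1 + d⁻¹) with hLdef
  have hdinv : 0 < d⁻¹ := inv_pos.mpr hd
  have hL1 : 1 ≤ L := by
    calc (1:ℝ) = Real.log (Real.exp 1) := (Real.log_exp 1).symm
    _ ≤ L := Real.log_le_log (Real.exp_pos 1) (by linarith)
  have hL0 : (0:ℝ) < L := lt_of_lt_of_le one_pos hL1
  have hexp : (0:ℝ) < Real.exp a := Real.exp_pos a
  have hR1 : (1:ℝ) ≤ 1 + Real.exp a * d := by nlinarith
  have hlogR : 0 ≤ Real.log (1 + Real.exp a * d) := Real.log_nonneg hR1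
  have main : a ≤ L * (1 + Real.log (1 + Real.exp a * d)) := by
    rcases le_or_gt 1 (Real.exp a * d) with hcase | hcase
    · have hlog2 : a + Real.log d ≤ Real.log (1 + Real.exp a * d) := by
        have h := Real.log_le_log (show (0:ℝ) < Real.exp a * d by positivity)
          (show Real.exp a * d ≤ 1 + Real.exp a * d by linarith)
        rwa [Real.log_mul (ne_of_gt hexp) (ne_of_gt hd), Real.log_exp] at h
      set b := -Real.log d with hbdef
      rcases le_or_gt b 0 with hb0 | hb0
      · nlinarith
      · have hbL : b ≤ L := by
          rw [hbdef, ← Real.log_inv]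
          exact Real.log_le_log hdinv (by linarith [Real.exp_pos 1])
        have hba : b ≤ a := by
          have h1 : d⁻¹ ≤ Real.exp a := by
            rw [inv_eq_one_div, div_le_iff₀ hd]; linarith
          have h2 : Real.log d⁻¹ ≤ Real.log (Real.exp a) :=
            Real.log_le_log hdinv h1
          rwa [Real.log_inv, Real.log_exp] at h2
        nlinarith
    · have haL : a ≤ L := by
        have h1 : Real.exp a < d⁻¹ := by
          rw [inv_eq_one_div, lt_div_iff₀ hd]; linarith
        have h2 : Real.exp a ≤ Real.exp 1 + d⁻¹ := by linarith [Real.exp_pos 1]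
        calc a = Real.log (Real.exp a) := (Real.log_exp a).symm
        _ ≤ L := Real.log_le_log hexp h2
      nlinarith
  have h2 : a * Clog ≤ L * (Clog + Clog * Real.log (1 + Real.exp a * d)) := by
    nlinarith [mul_le_mul_of_nonneg_left main hC.le]
  calc a * (Clog / L) = a * Clog / L := by ring
  _ ≤ Clog + Clog * Real.log (1 + Real.exp a * d) := by
      rw [div_le_iff₀ hL0]; linarith

/-- If `s` is log-Hölder continuous with constant `C_log`, then there is `c > 0` such that
`2^{k s(x)} η_{k,2m}(x−y) ≤ c · 2^{k s(y)} η_{k,m}(x−y)` for all `k`, `x`, `y` and `m > C_log`. -/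
theorem etaFun_logHolder_estimate {n : ℕ} (s : EuclideanSpace ℝ (Fin n) → ℝ)
    (Clog : ℝ) (hClog : 0 < Clog)
    (hs : ∀ x y : EuclideanSpace ℝ (Fin n), x ≠ y →
      |s x - s y| ≤ Clog / Real.log (Real.exp 1 + ‖x - y‖⁻¹)) :
    ∃ c : ℝ, 0 < c ∧ ∀ (k : ℕ) (x y : EuclideanSpace ℝ (Fin n)) (m : ℝ), Clog < m →
      (2 : ℝ) ^ ((k : ℝ) * s x) * etaFun n k (2 * m) (x - y) ≤
        c * ((2 : ℝ) ^ ((k : ℝ) * s y) * etaFun n k m (x - y)) := by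
  refine ⟨Real.exp Clog, Real.exp_pos _, ?_⟩
  intro k x y m hm
  have h2k : (0:ℝ) < (2:ℝ) ^ k := by positivity
  have hnorm : ‖((2:ℝ) ^ k) • (x - y)‖ = (2:ℝ) ^ k * ‖x - y‖ := by
    rw [norm_smul, Real.norm_eq_abs, abs_of_pos h2k]
  set R := 1 + (2:ℝ) ^ k * ‖x - y‖ with hRdef
  have hR1 : (1:ℝ) ≤ R := by
    have := mul_nonneg h2k.le (norm_nonneg (x - y)); linarith
  have hR0 : (0:ℝ) < R := lt_of_lt_of_le one_pos hR1
  have hlogR : 0 ≤ Real.log R := Real.log_nonneg hR1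
  -- key inequality on the exponents
  have keyexp : (k:ℝ) * s x * Real.log 2 ≤
      Clog + m * Real.log R + (k:ℝ) * s y * Real.log 2 := by
    rcases eq_or_ne x y with rfl | hxy
    · have : (0:ℝ) ≤ m * Real.log R := mul_nonneg (by linarith) hlogR
      nlinarith
    · have hd : 0 < ‖x - y‖ := by
        rw [norm_pos_iff]; exact sub_ne_zero.mpr hxy
      set a := (k:ℝ) * Real.log 2 with hadef
      have ha : 0 ≤ a := mul_nonneg (Nat.cast_nonneg k) (Real.log_nonneg one_le_two)
      have hexpa : Real.exp a = (2:ℝ) ^ k := by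
        rw [hadef, Real.exp_nat_mul, Real.exp_log two_pos]
      have hΔ : s x - s y ≤ Clog / Real.log (Real.exp 1 + ‖x - y‖⁻¹) :=
        le_trans (le_abs_self _) (hs x y hxy)
      have h1 : (k:ℝ) * (s x - s y) * Real.log 2 ≤
          a * (Clog / Real.log (Real.exp 1 + ‖x - y‖⁻¹)) := by
        have hLpos : 0 < Real.log (Real.exp 1 + ‖x - y‖⁻¹) := by
          have : (1:ℝ) ≤ Real.log (Real.exp 1 + ‖x - y‖⁻¹) := by
            calc (1:ℝ) = Real.log (Real.exp 1) := (Real.log_exp 1).symm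
            _ ≤ _ := Real.log_le_log (Real.exp_pos 1)
                (by linarith [inv_pos.mpr hd])
          linarith
        have h0 := mul_le_mul_of_nonneg_left hΔ ha
        calc (k:ℝ) * (s x - s y) * Real.log 2
            = a * (s x - s y) := by rw [hadef]; ring
        _ ≤ a * (Clog / Real.log (Real.exp 1 + ‖x - y‖⁻¹)) := h0
      have h2 := etaFun_aux Clog hClog a ‖x - y‖ ha hd
      rw [hexpa] at h2
      have h3 : Clog * Real.log R ≤ m * Real.log R :=
        mul_le_mul_of_nonneg_right hm.le hlogR
      nlinarith
  have key : (2:ℝ) ^ ((k:ℝ) * s x) ≤ Real.exp Clog * R ^ m * (2:ℝ) ^ ((k:ℝ) * s y) := by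
    rw [Real.rpow_def_of_pos two_pos, Real.rpow_def_of_pos hR0,
        Real.rpow_def_of_pos two_pos, ← Real.exp_add, ← Real.exp_add, Real.exp_le_exp]
    nlinarith [keyexp]
  -- unfold etaFun and finish
  unfold etaFun
  rw [hnorm, ← hRdef]
  have hsplit : R ^ (-(2 * m)) = R ^ (-m) * R ^ (-m) := by
    rw [← Real.rpow_add hR0]; ring_nf
  have hRm : R ^ m * R ^ (-m) = 1 := by
    rw [← Real.rpow_add hR0]; simp
  rw [hsplit]
  have hnn : (0:ℝ) ≤ (2:ℝ) ^ (k * n) * (R ^ (-m) * R ^ (-m)) := by positivity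
  have hmul := mul_le_mul_of_nonneg_right key hnn
  have heq : Real.exp Clog * R ^ m * (2:ℝ) ^ ((k:ℝ) * s y) *
      ((2:ℝ) ^ (k * n) * (R ^ (-m) * R ^ (-m))) =
      Real.exp Clog * ((2:ℝ) ^ ((k:ℝ) * s y) * ((2:ℝ) ^ (k * n) * R ^ (-m))) := by
    calc Real.exp Clog * R ^ m * (2:ℝ) ^ ((k:ℝ) * s y) *
        ((2:ℝ) ^ (k * n) * (R ^ (-m) * R ^ (-m)))
        = Real.exp Clog * ((2:ℝ) ^ ((k:ℝ) * s y) * ((2:ℝ) ^ (k * n) * R ^ (-m))) *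
          (R ^ m * R ^ (-m)) := by ring
    _ = _ := by rw [hRm, mul_one]
  rw [heq] at hmul
  linarith
end

section
/- Let 0 < a < 1, 0 < q ≤ ∞, δ > 0, and let (ε_k)_{k∈ℕ₀} be a sequence of nonnegative real numbers with ‖(ε_k)‖_{ℓ^q} = I < ∞. Define δ_k = ∑_{j=0}^∞ a^{|k−j|δ} ε_j. Then (δ_k)_{k∈ℕ₀} ∈ ℓ^q and ‖(δ_k)‖_{ℓ^q} ≤ c·I, where c depends only on a, δ, and q. -/
open scoped ENNReal

/-- The `ℓ^q` (quasi-)norm of a sequence of nonnegative reals, for `0 < q ≤ ∞`. -/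
noncomputable def lqNorm (q : ℝ≥0∞) (e : ℕ → ℝ) : ℝ≥0∞ :=
  if q = ⊤ then ⨆ k, ENNReal.ofReal (e k)
  else (∑' k : ℕ, ENNReal.ofReal (e k) ^ q.toReal) ^ (1 / q.toReal)

/-!
With `r = a ^ δ < 1` the kernel `a ^ (|k - j| δ) = r ^ |k - j|` has all row and column sums at
most `2 / (1 - r)`. For `q = ∞` the row sums bound `δ_k` by `sup ε`. For `1 ≤ q < ∞` this is the
Schur test: Jensen's inequality in each row, then the column bound after exchanging the sums.
For `q < 1` the subadditivity of `x ↦ x ^ q` reduces the claim to the column sums of the kernel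
`(r ^ q) ^ |k - j|`.
-/

namespace ENNReal

variable {ι κ : Type*}

theorem rpow_tsum_le_tsum_rpow {p : ℝ} (hp₀ : 0 < p) (hp₁ : p ≤ 1) (f : ι → ℝ≥0∞) :
    (∑' i, f i) ^ p ≤ ∑' i, f i ^ p := by
  have hsup : (⨆ s : Finset ι, ∑ i ∈ s, f i) ^ p = ⨆ s : Finset ι, (∑ i ∈ s, f i) ^ p :=
    (orderIsoRpow p hp₀).map_iSup _
  rw [ENNReal.tsum_eq_iSup_sum, hsup]
  refine iSup_le fun s => le_trans ?_ (ENNReal.sum_le_tsum s)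
  exact Finset.le_sum_of_subadditive (· ^ p) (by simp [hp₀])
    (fun x y => rpow_add_le_add_rpow x y hp₀.le hp₁) s f

theorem tsum_mul_le_weight_mul_Lp {p : ℝ} (hp : 1 ≤ p) (w f : ι → ℝ≥0∞) :
    ∑' i, w i * f i ≤ (∑' i, w i) ^ (1 - p⁻¹) * (∑' i, w i * f i ^ p) ^ p⁻¹ := by
  have hexp : 0 ≤ 1 - p⁻¹ := sub_nonneg.2 (inv_le_one_of_one_le₀ hp)
  rw [ENNReal.tsum_eq_iSup_sum]
  refine iSup_le fun s => (inner_le_weight_mul_Lp_of_nonneg s hp w f).trans ?_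
  gcongr <;> exact ENNReal.sum_le_tsum s

theorem rpow_tsum_mul_le_of_one_le {p : ℝ} (hp : 1 ≤ p) (w f : ι → ℝ≥0∞) :
    (∑' i, w i * f i) ^ p ≤ (∑' i, w i) ^ (p - 1) * ∑' i, w i * f i ^ p := by
  have hp₀ : 0 < p := zero_lt_one.trans_le hp
  calc (∑' i, w i * f i) ^ p
      ≤ ((∑' i, w i) ^ (1 - p⁻¹) * (∑' i, w i * f i ^ p) ^ p⁻¹) ^ p := by
        gcongr; exact tsum_mul_le_weight_mul_Lp hp w f
    _ = (∑' i, w i) ^ (p - 1) * ∑' i, w i * f i ^ p := by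
        rw [mul_rpow_of_nonneg _ _ hp₀.le, ← rpow_mul, ← rpow_mul, inv_mul_cancel₀ hp₀.ne',
          rpow_one, sub_mul, one_mul, inv_mul_cancel₀ hp₀.ne']

theorem two_mul_inv_one_sub_ne_top {r : ℝ≥0∞} (hr : r < 1) : 2 * (1 - r)⁻¹ ≠ ∞ :=
  mul_ne_top ofNat_ne_top (inv_ne_top.2 (tsub_pos_of_lt hr).ne')

theorem ofReal_tsum_le_tsum_ofReal {f : ι → ℝ} (hf : ∀ i, 0 ≤ f i) :
    ENNReal.ofReal (∑' i, f i) ≤ ∑' i, ENNReal.ofReal (f i) := by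
  by_cases hs : Summable f
  · exact (ofReal_tsum_of_nonneg hf hs).le
  · simp [tsum_eq_zero_of_not_summable hs]

section Kernel

variable {K : κ → ι → ℝ≥0∞} {S : ℝ≥0∞}

theorem tsum_tsum_mul_le (hcol : ∀ j, ∑' k, K k j ≤ S) (g : ι → ℝ≥0∞) :
    ∑' k, ∑' j, K k j * g j ≤ S * ∑' j, g j := by
  rw [ENNReal.tsum_comm, ← ENNReal.tsum_mul_left]
  refine ENNReal.tsum_le_tsum fun j => ?_
  rw [ENNReal.tsum_mul_right]
  gcongr
  exact hcol j

theorem iSup_tsum_mul_le (hrow : ∀ k, ∑' j, K k j ≤ S) (f : ι → ℝ≥0∞) :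
    ⨆ k, ∑' j, K k j * f j ≤ S * ⨆ j, f j := by
  refine iSup_le fun k => ?_
  calc ∑' j, K k j * f j ≤ ∑' j, K k j * ⨆ i, f i := by gcongr with j; exact le_iSup f j
    _ = (∑' j, K k j) * ⨆ i, f i := ENNReal.tsum_mul_right
    _ ≤ S * ⨆ i, f i := by gcongr; exact hrow k

theorem tsum_rpow_tsum_mul_le_of_le_one {p : ℝ} (hp₀ : 0 < p) (hp₁ : p ≤ 1)
    (hcol : ∀ j, ∑' k, K k j ^ p ≤ S) (f : ι → ℝ≥0∞) :
    ∑' k, (∑' j, K k j * f j) ^ p ≤ S * ∑' j, f j ^ p :=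
  calc ∑' k, (∑' j, K k j * f j) ^ p ≤ ∑' k, ∑' j, K k j ^ p * f j ^ p := by
        gcongr with k
        simp_rw [← mul_rpow_of_nonneg _ _ hp₀.le]
        exact rpow_tsum_le_tsum_rpow hp₀ hp₁ _
    _ ≤ S * ∑' j, f j ^ p := tsum_tsum_mul_le hcol _

/-- The Schur test. -/
theorem tsum_rpow_tsum_mul_le_of_one_le {p : ℝ} (hp : 1 ≤ p)
    (hrow : ∀ k, ∑' j, K k j ≤ S) (hcol : ∀ j, ∑' k, K k j ≤ S) (f : ι → ℝ≥0∞) :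
    ∑' k, (∑' j, K k j * f j) ^ p ≤ S ^ p * ∑' j, f j ^ p :=
  calc ∑' k, (∑' j, K k j * f j) ^ p ≤ ∑' k, S ^ (p - 1) * ∑' j, K k j * f j ^ p := by
        gcongr with k
        refine (rpow_tsum_mul_le_of_one_le hp _ _).trans ?_
        gcongr
        exact hrow k
    _ = S ^ (p - 1) * ∑' k, ∑' j, K k j * f j ^ p := ENNReal.tsum_mul_left
    _ ≤ S ^ (p - 1) * (S ^ (1 : ℝ) * ∑' j, f j ^ p) := by
        rw [rpow_one]; gcongr; exact tsum_tsum_mul_le hcol _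
    _ = S ^ p * ∑' j, f j ^ p := by
        rw [← mul_assoc, ← rpow_add_of_nonneg _ _ (by linarith) zero_le_one, sub_add_cancel]

end Kernel

end ENNReal

open ENNReal

theorem tsum_pow_natDist_le (r : ℝ≥0∞) (k : ℕ) : ∑' j, r ^ Nat.dist k j ≤ 2 * (1 - r)⁻¹ := by
  rw [← ENNReal.summable.sum_add_tsum_nat_add' (k := k + 1), two_mul, ← tsum_geometric]
  refine add_le_add ?_ ?_
  · calc ∑ j ∈ Finset.range (k + 1), r ^ Nat.dist k j
        = ∑ j ∈ Finset.range (k + 1), r ^ (k + 1 - 1 - j) :=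
          Finset.sum_congr rfl fun j hj => by
            rw [Nat.dist_eq_sub_of_le_right (Finset.mem_range_succ_iff.1 hj), Nat.add_sub_cancel]
      _ = ∑ j ∈ Finset.range (k + 1), r ^ j := Finset.sum_range_reflect _ _
      _ ≤ ∑' n, r ^ n := ENNReal.sum_le_tsum _
  · calc ∑' i, r ^ Nat.dist k (i + (k + 1)) = ∑' i, r ^ (i + 1) := by
          refine tsum_congr fun i => ?_
          rw [Nat.dist_eq_sub_of_le (by omega)]
          congr 1
          omega
      _ ≤ ∑' n, r ^ n := ENNReal.tsum_comp_le_tsum_of_injective Nat.succ_injective (r ^ ·)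

theorem exists_tsum_rpow_tsum_pow_natDist_mul_le {r : ℝ≥0∞} (hr : r < 1) {p : ℝ} (hp : 0 < p) :
    ∃ C ≠ ∞, ∀ f : ℕ → ℝ≥0∞,
      ∑' k, (∑' j, r ^ Nat.dist k j * f j) ^ p ≤ C * ∑' j, f j ^ p := by
  rcases le_total p 1 with hp₁ | hp₁
  · refine ⟨2 * (1 - r ^ p)⁻¹, two_mul_inv_one_sub_ne_top (rpow_lt_one hr hp),
      tsum_rpow_tsum_mul_le_of_le_one hp hp₁ fun j => ?_⟩
    simp_rw [← rpow_natCast_mul, mul_comm _ p, rpow_mul_natCast, Nat.dist_comm _ j]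
    exact tsum_pow_natDist_le _ j
  · refine ⟨(2 * (1 - r)⁻¹) ^ p, rpow_ne_top_of_nonneg hp.le (two_mul_inv_one_sub_ne_top hr),
      tsum_rpow_tsum_mul_le_of_one_le hp₁ (tsum_pow_natDist_le r) fun j => ?_⟩
    simp_rw [Nat.dist_comm _ j]
    exact tsum_pow_natDist_le r j

theorem Nat.abs_cast_sub_cast (k j : ℕ) : |(k : ℝ) - j| = Nat.dist k j := by
  rcases le_total j k with h | h
  · rw [Nat.dist_eq_sub_of_le_right h, Nat.cast_sub h, abs_of_nonneg (by simpa using h)]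
  · rw [Nat.dist_eq_sub_of_le h, Nat.cast_sub h, abs_sub_comm, abs_of_nonneg (by simpa using h)]

theorem ofReal_tsum_rpow_abs_sub_mul_le {a : ℝ} (ha : 0 < a) (δ : ℝ) {e : ℕ → ℝ} (he : ∀ j, 0 ≤ e j)
    (k : ℕ) :
    ENNReal.ofReal (∑' j : ℕ, a ^ (|(k : ℝ) - j| * δ) * e j) ≤
      ∑' j, (ENNReal.ofReal a ^ δ) ^ Nat.dist k j * ENNReal.ofReal (e j) := by
  refine (ofReal_tsum_le_tsum_ofReal fun j => mul_nonneg (by positivity) (he j)).trans_eq ?_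
  refine tsum_congr fun j => ?_
  rw [ofReal_mul (by positivity), ← ofReal_rpow_of_pos ha, Nat.abs_cast_sub_cast,
    mul_comm _ δ, rpow_mul_natCast]

/-- Let `0 < a < 1`, `0 < q ≤ ∞`, `δ > 0`. If `(ε_k)` is a nonnegative sequence with finite
`ℓ^q`-norm `I`, then the sequence `δ_k = ∑_j a^{|k−j|δ} ε_j` belongs to `ℓ^q` with norm
`≤ c·I`, where `c` depends only on `a`, `δ` and `q`. -/
theorem lq_convolution_bound (a : ℝ) (ha₀ : 0 < a) (ha₁ : a < 1)
    (q : ℝ≥0∞) (hq : 0 < q) (δ : ℝ) (hδ : 0 < δ) :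
    ∃ c : ℝ≥0∞, c ≠ ⊤ ∧ ∀ e : ℕ → ℝ, (∀ k, 0 ≤ e k) → lqNorm q e ≠ ⊤ →
      lqNorm q (fun k => ∑' j : ℕ, a ^ (|(k : ℝ) - (j : ℝ)| * δ) * e j) ≤
        c * lqNorm q e := by
  set r := ENNReal.ofReal a ^ δ
  have hr : r < 1 := rpow_lt_one (ofReal_lt_one.2 ha₁) hδ
  rcases eq_or_ne q ⊤ with rfl | hq_top
  · refine ⟨2 * (1 - r)⁻¹, two_mul_inv_one_sub_ne_top hr, fun e he _ => ?_⟩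
    simp only [lqNorm, if_true]
    exact (iSup_mono (ofReal_tsum_rpow_abs_sub_mul_le ha₀ δ he)).trans
      (iSup_tsum_mul_le (tsum_pow_natDist_le r) _)
  · have hp : 0 < q.toReal := toReal_pos hq.ne' hq_top
    obtain ⟨C, hC, hCf⟩ := exists_tsum_rpow_tsum_pow_natDist_mul_le hr hp
    refine ⟨C ^ (1 / q.toReal), rpow_ne_top_of_nonneg (by positivity) hC, fun e he _ => ?_⟩
    simp only [lqNorm, if_neg hq_top]
    rw [← mul_rpow_of_nonneg _ _ (by positivity)]
    gcongr
    calc _ ≤ ∑' k, (∑' j, r ^ Nat.dist k j * ENNReal.ofReal (e j)) ^ q.toReal := by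
          gcongr with k; exact ofReal_tsum_rpow_abs_sub_mul_le ha₀ δ he k
      _ ≤ _ := hCf _
end

section
/- Let η ∈ S(ℝ) be nonnegative with supp η ⊆ (−2, −1) and ∫ η = 2, and define ψ₀(z) = ∫_{−∞}^0 η(t) dt − iz = 2 − iz. Then for every z ∈ ℂ with Im(z) ≥ 0 and |z| ≤ 4, Re(ψ₀(z)) = 2 + Im(z) ≥ 2; moreover for all sufficiently small ε > 0, Re(ψ_ε(z)) = ∫_{−∞}^0 η(t) e^{εt·Im(z)} cos(εt·Re(z)) dt + Im(z) ≥ 3/2 for all z with |z| ≤ 4 and Im(z) ≥ 0. -/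
/-!
For `t ≤ 0`, `ε ≥ 0` and `Im z ≥ 0` the factor `e^{−iεtz}` has modulus `e^{εt Im z} ≤ 1`, so the
integral defining `ψ_ε` converges and `Re ψ_ε(z) = ∫ η(t) Re e^{−iεtz} dt + Im z`. At `ε = 0` this
is `∫ η + Im z = 2 + Im z`. For `ε > 0`, on the support of `η` we have `|εtz| ≤ 8ε`, and
`|e^w − 1| ≤ 2|w|` gives `Re e^{−iεtz} ≥ 1 − 16ε`, hence `Re ψ_ε(z) ≥ 2(1 − 16ε) ≥ 3/2`
once `ε ≤ 1/64`.
-/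
open MeasureTheory Complex

/-- `ψ_ε(z) = ∫_{−∞}^0 η(t) e^{−iεtz} dt − iz`. -/
noncomputable def psiEps (η : ℝ → ℝ) (ε : ℝ) (z : ℂ) : ℂ :=
  (∫ t in Set.Iic (0 : ℝ), (η t : ℂ) * Complex.exp (-Complex.I * ε * t * z)) -
    Complex.I * z

open Set

lemma norm_cexp_neg_I_mul_le_one {ε t : ℝ} {z : ℂ} (hε : 0 ≤ ε) (ht : t ≤ 0) (hz : 0 ≤ z.im) :
    ‖cexp (-I * ε * t * z)‖ ≤ 1 := by
  rw [Complex.norm_exp, Real.exp_le_one_iff]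
  have : (-I * ε * t * z).re = ε * t * z.im := by simp
  rw [this]
  exact mul_nonpos_of_nonpos_of_nonneg (mul_nonpos_of_nonneg_of_nonpos hε ht) hz

lemma one_sub_two_mul_norm_le_re_cexp {w : ℂ} (hw : ‖w‖ ≤ 1) : 1 - 2 * ‖w‖ ≤ (cexp w).re := by
  have h := (abs_re_le_norm (cexp w - 1)).trans (norm_exp_sub_one_le hw)
  rw [sub_re, one_re] at h
  linarith [(abs_le.1 h).1]

lemma integrableOn_psiEps_integrand {η : ℝ → ℝ} (hη : IntegrableOn η (Iic 0)) {ε : ℝ}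
    (hε : 0 ≤ ε) {z : ℂ} (hz : 0 ≤ z.im) :
    IntegrableOn (fun t : ℝ => (η t : ℂ) * cexp (-I * ε * t * z)) (Iic 0) := by
  refine hη.ofReal.mul_bdd (c := 1) (by fun_prop : Continuous _).aestronglyMeasurable ?_
  exact (ae_restrict_iff' measurableSet_Iic).2
    (ae_of_all _ fun t ht => norm_cexp_neg_I_mul_le_one hε ht hz)

lemma psiEps_re {η : ℝ → ℝ} (hη : IntegrableOn η (Iic 0)) {ε : ℝ} (hε : 0 ≤ ε) {z : ℂ}
    (hz : 0 ≤ z.im) :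
    (psiEps η ε z).re = (∫ t in Iic 0, η t * (cexp (-I * ε * t * z)).re) + z.im := by
  rw [psiEps, sub_re, ← RCLike.re_eq_complex_re,
    ← integral_re (integrableOn_psiEps_integrand hη hε hz)]
  simp

lemma le_psiEps_re {η : ℝ → ℝ} (hη₀ : ∀ t, 0 ≤ η t) (hη : IntegrableOn η (Iic 0)) {R : ℝ}
    (hsupp : ∀ t, η t ≠ 0 → -R ≤ t) {ε : ℝ} (hε : 0 ≤ ε) {z : ℂ} (hz : 0 ≤ z.im)
    (hsmall : ε * R * ‖z‖ ≤ 1) :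
    (1 - 2 * (ε * R * ‖z‖)) * ∫ t in Iic 0, η t ≤ (psiEps η ε z).re := by
  have hpoint : ∀ t ∈ Iic (0 : ℝ),
      η t * (1 - 2 * (ε * R * ‖z‖)) ≤ η t * (cexp (-I * ε * t * z)).re := by
    intro t ht
    rcases eq_or_ne (η t) 0 with h | h
    · simp [h]
    have hw : ‖-I * ε * t * z‖ ≤ ε * R * ‖z‖ := by
      have : |t| ≤ R := abs_le.2 ⟨by linarith [hsupp t h], by linarith [hsupp t h, mem_Iic.1 ht]⟩
      simp only [norm_mul, norm_neg, norm_I, norm_real, Real.norm_eq_abs, abs_of_nonneg hε]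
      gcongr
      simp
    refine mul_le_mul_of_nonneg_left ?_ (hη₀ t)
    linarith [one_sub_two_mul_norm_le_re_cexp (hw.trans hsmall)]
  calc (1 - 2 * (ε * R * ‖z‖)) * ∫ t in Iic 0, η t
      = ∫ t in Iic 0, η t * (1 - 2 * (ε * R * ‖z‖)) := by rw [integral_mul_const, mul_comm]
    _ ≤ ∫ t in Iic 0, η t * (cexp (-I * ε * t * z)).re :=
        setIntegral_mono_on (hη.mul_const _)
          (Integrable.congr (integrableOn_psiEps_integrand hη hε hz).re
            (ae_of_all _ fun t => by simp))
          measurableSet_Iic hpoint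
    _ ≤ (psiEps η ε z).re := by rw [psiEps_re hη hε hz]; linarith

/-- Let `η` be a nonnegative Schwartz bump with support in `(−2,−1)` and `∫ η = 2`.
Then for `|z| ≤ 4`, `Im z ≥ 0`: `Re ψ₀(z) = 2 + Im z ≥ 2`; moreover for all sufficiently
small `ε > 0` one has `Re ψ_ε(z) ≥ 3/2` on the same region. -/
theorem psiEps_re_lower_bound (η : SchwartzMap ℝ ℝ)
    (hη₀ : ∀ t, 0 ≤ η t)
    (hηsupp : ∀ t, η t ≠ 0 → t ∈ Set.Ioo (-2 : ℝ) (-1))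
    (hηint : (∫ t : ℝ, η t) = 2) :
    (∀ z : ℂ, 0 ≤ z.im → ‖z‖ ≤ 4 →
      (psiEps (⇑η) 0 z).re = 2 + z.im ∧ 2 ≤ (psiEps (⇑η) 0 z).re) ∧
    (∃ ε₀ : ℝ, 0 < ε₀ ∧ ∀ ε : ℝ, 0 < ε → ε ≤ ε₀ →
      ∀ z : ℂ, 0 ≤ z.im → ‖z‖ ≤ 4 → (3 : ℝ) / 2 ≤ (psiEps (⇑η) ε z).re) := by
  have hηon : IntegrableOn η (Iic 0) := η.integrable.integrableOn
  have hηIic : ∫ t in Iic 0, η t = 2 := by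
    rw [setIntegral_eq_integral_of_forall_compl_eq_zero, hηint]
    intro t ht
    by_contra h
    exact ht ((hηsupp t h).2.le.trans (by norm_num))
  refine ⟨fun z hz _ => ?_, ⟨1 / 64, by norm_num, fun ε hε hε₀ z hz hz4 => ?_⟩⟩
  · have h0 : (psiEps η 0 z).re = 2 + z.im := by simpa [hηIic] using psiEps_re hηon le_rfl hz
    exact ⟨h0, by linarith⟩
  · have hsmall : ε * 2 * ‖z‖ ≤ 1 / 8 := by nlinarith [norm_nonneg z]
    have := le_psiEps_re hη₀ hηon (R := 2) (fun t ht => (hηsupp t ht).1.le) hε.le hz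
      (hsmall.trans (by norm_num))
    rw [hηIic] at this
    linarith
end

section
/- Define φ(x', z_n) = ⟨x'⟩ ψ_ε(z_n/⟨x'⟩) for (x', z_n) ∈ ℝ^{n−1} × {Im ≥ 0}, where ψ_ε(z) = ∫_{−∞}^0 η(t) e^{−iεtz} dt − iz with η as above and ε > 0 small. Then ⟨x'⟩ + |z_n| ∼ |φ(x', z_n)| uniformly in (x', z_n), i.e. there are constants c, C > 0 with c(⟨x'⟩ + |z_n|) ≤ |φ(x', z_n)| ≤ C(⟨x'⟩ + |z_n|). -/
open MeasureTheory Complex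

/-- The Japanese bracket `⟨x'⟩ = (1 + |x'|²)^{1/2}`. -/
noncomputable def brak {k : ℕ} (x' : EuclideanSpace ℝ (Fin k)) : ℝ :=
  Real.sqrt (1 + ‖x'‖ ^ 2)

/-- `φ(x', z_n) = ⟨x'⟩ ψ_ε(z_n/⟨x'⟩)`. -/
noncomputable def phiSym {k : ℕ} (η : ℝ → ℝ) (ε : ℝ)
    (x' : EuclideanSpace ℝ (Fin k)) (z : ℂ) : ℂ :=
  (brak x' : ℂ) * psiEps η ε (z / (brak x' : ℂ))

/-! For `Im z ≥ 0`, `t ≤ 0` and `ε ≥ 0` the factor `e^{−iεtz}` has modulus `e^{εt Im z} ≤ 1`, so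
`ψ_ε(z) + iz` is bounded by `∫ η = 2`. Hence `|z| − 2 ≤ |ψ_ε(z)| ≤ |z| + 2`, which together with
`|ψ_ε| ≥ 3/2` on `{|z| ≤ 4}` gives `|ψ_ε(w)| ∼ 1 + |w|` on the closed upper half-plane.
Since `φ(x', z) = ⟨x'⟩ ψ_ε(z/⟨x'⟩)` and `⟨x'⟩ (1 + |z/⟨x'⟩|) = ⟨x'⟩ + |z|`, the claim follows. -/

lemma norm_exp_neg_I_mul_le_one {ε t : ℝ} {z : ℂ} (hε : 0 ≤ ε) (ht : t ≤ 0) (hz : 0 ≤ z.im) :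
    ‖exp (-I * ε * t * z)‖ ≤ 1 := by
  have hre : (-I * ε * t * z).re = ε * t * z.im := by simp [mul_re, mul_im]
  rw [norm_exp, hre, Real.exp_le_one_iff]
  exact mul_nonpos_of_nonpos_of_nonneg (mul_nonpos_of_nonneg_of_nonpos hε ht) hz

lemma norm_setIntegral_Iic_mul_exp_le {η : ℝ → ℝ} (hη : Integrable η) (hη₀ : ∀ t, 0 ≤ η t)
    {ε : ℝ} (hε : 0 ≤ ε) {z : ℂ} (hz : 0 ≤ z.im) :
    ‖∫ t in Set.Iic (0 : ℝ), (η t : ℂ) * exp (-I * ε * t * z)‖ ≤ ∫ t, η t := by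
  have hpointwise : ∀ t ∈ Set.Iic (0 : ℝ), ‖(η t : ℂ) * exp (-I * ε * t * z)‖ ≤ η t := by
    intro t ht
    rw [norm_mul, norm_real, Real.norm_of_nonneg (hη₀ t)]
    exact mul_le_of_le_one_right (hη₀ t) (norm_exp_neg_I_mul_le_one hε ht hz)
  calc ‖∫ t in Set.Iic (0 : ℝ), (η t : ℂ) * exp (-I * ε * t * z)‖
      ≤ ∫ t in Set.Iic (0 : ℝ), ‖(η t : ℂ) * exp (-I * ε * t * z)‖ :=
        norm_integral_le_integral_norm _
    _ ≤ ∫ t in Set.Iic (0 : ℝ), η t :=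
        integral_mono_of_nonneg (.of_forall fun _ => norm_nonneg _) hη.integrableOn
          ((ae_restrict_iff' measurableSet_Iic).mpr (.of_forall hpointwise))
    _ ≤ ∫ t, η t := setIntegral_le_integral hη (Filter.Eventually.of_forall hη₀)

section psiEps

variable {η : ℝ → ℝ} {ε : ℝ} {z : ℂ}

lemma norm_psiEps_le (hη : Integrable η) (hη₀ : ∀ t, 0 ≤ η t) (hε : 0 ≤ ε) (hz : 0 ≤ z.im) :
    ‖psiEps η ε z‖ ≤ ‖z‖ + ∫ t, η t := by
  have h := norm_sub_le (∫ t in Set.Iic (0 : ℝ), (η t : ℂ) * exp (-I * ε * t * z)) (I * z)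
  rw [norm_mul, norm_I, one_mul] at h
  rw [psiEps]
  linarith [norm_setIntegral_Iic_mul_exp_le hη hη₀ hε hz]

lemma norm_sub_integral_le_norm_psiEps (hη : Integrable η) (hη₀ : ∀ t, 0 ≤ η t) (hε : 0 ≤ ε)
    (hz : 0 ≤ z.im) : ‖z‖ - ∫ t, η t ≤ ‖psiEps η ε z‖ := by
  have h := norm_sub_norm_le (I * z) (∫ t in Set.Iic (0 : ℝ), (η t : ℂ) * exp (-I * ε * t * z))
  rw [norm_mul, norm_I, one_mul, norm_sub_rev] at h
  rw [psiEps]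
  linarith [norm_setIntegral_Iic_mul_exp_le hη hη₀ hε hz]

lemma psiEps_comparable (hη : Integrable η) (hη₀ : ∀ t, 0 ≤ η t) (hηint : ∫ t, η t = 2)
    (hε : 0 ≤ ε) (hre : ∀ z : ℂ, 0 ≤ z.im → ‖z‖ ≤ 4 → (3 : ℝ) / 2 ≤ (psiEps η ε z).re)
    (hz : 0 ≤ z.im) :
    3 / 10 * (1 + ‖z‖) ≤ ‖psiEps η ε z‖ ∧ ‖psiEps η ε z‖ ≤ 2 * (1 + ‖z‖) := by
  have hlow := norm_sub_integral_le_norm_psiEps hη hη₀ hε hz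
  have hup := norm_psiEps_le hη hη₀ hε hz
  rw [hηint] at hlow hup
  refine ⟨?_, by linarith [norm_nonneg z]⟩
  rcases le_or_gt ‖z‖ 4 with hsmall | hlarge
  · linarith [hre z hz hsmall, re_le_norm (psiEps η ε z)]
  · linarith

end psiEps

lemma one_le_brak {k : ℕ} (x' : EuclideanSpace ℝ (Fin k)) : 1 ≤ brak x' :=
  Real.one_le_sqrt.mpr (le_add_of_nonneg_right (sq_nonneg _))

lemma norm_phiSym {k : ℕ} (η : ℝ → ℝ) (ε : ℝ) (x' : EuclideanSpace ℝ (Fin k)) (z : ℂ) :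
    ‖phiSym η ε x' z‖ = brak x' * ‖psiEps η ε (z / (brak x' : ℂ))‖ := by
  rw [phiSym, norm_mul, norm_real, Real.norm_of_nonneg (zero_le_one.trans (one_le_brak x'))]

lemma mul_one_add_norm_div_ofReal {r : ℝ} (hr : 0 < r) (z : ℂ) :
    r * (1 + ‖z / (r : ℂ)‖) = r + ‖z‖ := by
  rw [norm_div, norm_real, Real.norm_of_nonneg hr.le]
  field_simp

theorem phiSym_comparable_general {k : ℕ} (η : SchwartzMap ℝ ℝ)
    (hη₀ : ∀ t, 0 ≤ η t)
    (hηint : (∫ t : ℝ, η t) = 2)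
    (ε : ℝ) (hε : 0 < ε)
    (hre : ∀ z : ℂ, 0 ≤ z.im → ‖z‖ ≤ 4 → (3 : ℝ) / 2 ≤ (psiEps (⇑η) ε z).re) :
    ∃ c C : ℝ, 0 < c ∧ 0 < C ∧
      ∀ (x' : EuclideanSpace ℝ (Fin k)) (z : ℂ), 0 ≤ z.im →
        c * (brak x' + ‖z‖) ≤ ‖phiSym (⇑η) ε x' z‖ ∧
        ‖phiSym (⇑η) ε x' z‖ ≤ C * (brak x' + ‖z‖) := by
  refine ⟨3 / 10, 2, by norm_num, by norm_num, fun x' z hz => ?_⟩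
  have hr : 0 < brak x' := zero_lt_one.trans_le (one_le_brak x')
  have hw : 0 ≤ (z / (brak x' : ℂ)).im := by
    rw [div_ofReal_im]
    positivity
  obtain ⟨hlow, hup⟩ := psiEps_comparable η.integrable hη₀ hηint hε.le hre hw
  rw [norm_phiSym, ← mul_one_add_norm_div_ofReal hr z, mul_left_comm, mul_left_comm 2]
  exact ⟨mul_le_mul_of_nonneg_left hlow hr.le, mul_le_mul_of_nonneg_left hup hr.le⟩

/-- If `η` is a nonnegative Schwartz bump with support in `(−2,−1)`, `∫ η = 2`, and
`ε > 0` is small enough that `Re ψ_ε ≥ 3/2` on `{|z| ≤ 4, Im z ≥ 0}`, then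
`⟨x'⟩ + |z_n| ∼ |φ(x', z_n)|` uniformly on `ℝ^{n-1} × {Im ≥ 0}`. -/
theorem phiSym_comparable {k : ℕ} (η : SchwartzMap ℝ ℝ)
    (hη₀ : ∀ t, 0 ≤ η t)
    (hηsupp : ∀ t, η t ≠ 0 → t ∈ Set.Ioo (-2 : ℝ) (-1))
    (hηint : (∫ t : ℝ, η t) = 2)
    (ε : ℝ) (hε : 0 < ε)
    (hre : ∀ z : ℂ, 0 ≤ z.im → ‖z‖ ≤ 4 → (3 : ℝ) / 2 ≤ (psiEps (⇑η) ε z).re) :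
    ∃ c C : ℝ, 0 < c ∧ 0 < C ∧
      ∀ (x' : EuclideanSpace ℝ (Fin k)) (z : ℂ), 0 ≤ z.im →
        c * (brak x' + ‖z‖) ≤ ‖phiSym (⇑η) ε x' z‖ ∧
        ‖phiSym (⇑η) ε x' z‖ ≤ C * (brak x' + ‖z‖) :=
  phiSym_comparable_general η hη₀ hηint ε hε hre
end
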